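/- arXiv:1703.09945 — 6 statements merged into one kernel-verified Lean document; each statement's English description precedes it below -/
import Mathlib

section
/- Let k ≥ 1, let ι be a finite nonempty index set, let γ_i, η_i : Fin k → ℝ for i ∈ ι, and let A, B : Fin k → ℝ satisfy ⟨A,γ_i⟩ > 0 and ⟨B,γ_i⟩ > 0 for every i ∈ ι. Define λ(X) = max over i ∈ ι of ⟨X,η_i⟩/⟨X,γ_i⟩. Then for every t ∈ [0,1], λ(A_t) ≤ max (λ(A)) (λ(B)), where A_t = t•B + (1−t)•A. -/
/-!
Each ratio `⟨X,η i⟩/⟨X,γ i⟩` is quasiconvex on the half-space `⟨X,γ i⟩ > 0`: there its sublevel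
set `{ratio ≤ r}` is cut out by the linear inequality `⟨X, η i - r • γ i⟩ ≤ 0`. A finite maximum
of quasiconvex functions is quasiconvex, its sublevel sets being intersections, and quasiconvexity
on a convex set is exactly the inequality `λ(A_t) ≤ max (λ A) (λ B)` along segments.
-/

open Finset

/-- The displacement function on a simplex: the maximum over the (finitely many)
candidates `i` of the stretching factors `⟨X,η i⟩/⟨X,γ i⟩`. -/
noncomputable def lamFun {k : ℕ} {ι : Type} [Fintype ι] [Nonempty ι]
    (γ η : ι → Fin k → ℝ) (X : Fin k → ℝ) : ℝ :=
  Finset.univ.sup' Finset.univ_nonempty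
    (fun i => (∑ j, X j * η i j) / (∑ j, X j * γ i j))

section Quasiconvex

variable {𝕜 E β ι : Type*}

theorem QuasiconvexOn.finset_sup' [Semiring 𝕜] [PartialOrder 𝕜] [AddCommMonoid E]
    [SemilatticeSup β] [SMul 𝕜 E] {s : Set E} {t : Finset ι} (ht : t.Nonempty)
    {f : ι → E → β} (hf : ∀ i ∈ t, QuasiconvexOn 𝕜 s (f i)) :
    QuasiconvexOn 𝕜 s (fun x => t.sup' ht (f · x)) := by
  intro r
  have hsublevel : {x ∈ s | t.sup' ht (f · x) ≤ r} = ⋂ i ∈ t, {x ∈ s | f i x ≤ r} := by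
    obtain ⟨i₀, hi₀⟩ := id ht
    ext x
    simp only [Set.mem_ofPred_eq, Set.mem_iInter, Finset.sup'_le_iff]
    exact ⟨fun h i hi => ⟨h.1, h.2 i hi⟩, fun h => ⟨(h i₀ hi₀).1, fun i hi => (h i hi).2⟩⟩
  rw [hsublevel]
  exact convex_iInter₂ fun i hi => hf i hi r

theorem LinearMap.quasiconvexOn_div [Field 𝕜] [LinearOrder 𝕜] [IsStrictOrderedRing 𝕜]
    [AddCommGroup E] [Module 𝕜 E] (f g : E →ₗ[𝕜] 𝕜) :
    QuasiconvexOn 𝕜 {x | 0 < g x} (fun x => f x / g x) := by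
  intro r
  have hsublevel : {x ∈ {x | 0 < g x} | f x / g x ≤ r} =
      {x | 0 < g x} ∩ {x | (f - r • g) x ≤ 0} := by
    ext x
    simp only [Set.mem_ofPred_eq, Set.mem_inter_iff, LinearMap.sub_apply, LinearMap.smul_apply,
      smul_eq_mul, sub_nonpos]
    exact and_congr_right fun hg => div_le_iff₀ hg
  rw [hsublevel]
  exact (convex_halfSpace_gt g.isLinear 0).inter (convex_halfSpace_le (f - r • g).isLinear 0)

end Quasiconvex

-- `(dotProductBilin ℝ ℝ).flip v` is definitionally `fun X => ∑ j, X j * v j`.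
theorem lamFun_quasiconvexOn {k : ℕ} {ι : Type} [Fintype ι] [Nonempty ι]
    (γ η : ι → Fin k → ℝ) :
    QuasiconvexOn ℝ {X | ∀ i, 0 < ∑ j, X j * γ i j} (lamFun γ η) := by
  have hconv : Convex ℝ {X : Fin k → ℝ | ∀ i, 0 < ∑ j, X j * γ i j} := by
    rw [Set.ofPred_forall]
    exact convex_iInter fun i => convex_halfSpace_gt ((dotProductBilin ℝ ℝ).flip (γ i)).isLinear 0
  exact QuasiconvexOn.finset_sup' univ_nonempty fun i _ =>
    hconv.quasiconvexOn_restrict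
      (LinearMap.quasiconvexOn_div ((dotProductBilin ℝ ℝ).flip (η i))
        ((dotProductBilin ℝ ℝ).flip (γ i)))
      fun X hX => hX i

theorem displacement_quasiconvex_on_segment_general
    (k : ℕ) (ι : Type) [Fintype ι] [Nonempty ι]
    (γ η : ι → Fin k → ℝ) (A B : Fin k → ℝ)
    (hA : ∀ i : ι, 0 < ∑ j, A j * γ i j)
    (hB : ∀ i : ι, 0 < ∑ j, B j * γ i j) :
    ∀ t ∈ Set.Icc (0:ℝ) 1,
      lamFun γ η (fun j => t * B j + (1 - t) * A j) ≤
        max (lamFun γ η A) (lamFun γ η B) := by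
  rintro t ⟨ht₀, ht₁⟩
  rw [max_comm]
  exact (quasiconvexOn_iff_le_max.1 (lamFun_quasiconvexOn γ η)).2 hB hA ht₀ (sub_nonneg.2 ht₁)
    (add_sub_cancel t 1)

/-- Quasi-convexity of the displacement function on Euclidean segments:
`λ(A_t) ≤ max (λ A) (λ B)` for `t ∈ [0,1]`, where `A_t = t•B + (1-t)•A`. -/
theorem displacement_quasiconvex_on_segment
    (k : ℕ) (hk : 1 ≤ k) (ι : Type) [Fintype ι] [Nonempty ι]
    (γ η : ι → Fin k → ℝ) (A B : Fin k → ℝ)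
    (hA : ∀ i : ι, 0 < ∑ j, A j * γ i j)
    (hB : ∀ i : ι, 0 < ∑ j, B j * γ i j) :
    ∀ t ∈ Set.Icc (0:ℝ) 1,
      lamFun γ η (fun j => t * B j + (1 - t) * A j) ≤
        max (lamFun γ η A) (lamFun γ η B) :=
  displacement_quasiconvex_on_segment_general k ι γ η A B hA hB
end

section
/- Let k ≥ 1, let ι be a finite nonempty index set, let γ_i, η_i : Fin k → ℝ for i ∈ ι, and let A, B : Fin k → ℝ satisfy ⟨A,γ_i⟩ > 0 and ⟨B,γ_i⟩ > 0 for every i ∈ ι. Define λ(X) = max over i ∈ ι of ⟨X,η_i⟩/⟨X,γ_i⟩ and A_t = t•B + (1−t)•A. If there exists ε ∈ (0,1] such that λ(A_t) = λ(A) for all t ∈ [0,ε], then λ(A) ≤ λ(B). Equivalently, if λ(A) > λ(B) then λ is not locally constant near A along the segment from A to B. -/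
/-!
For each `t ∈ [0, ε]` the maximum `λ(A_t) = λ(A) =: L` is attained by some candidate `i`, i.e.
the defect `⟨X, η i⟩ - L ⟨X, γ i⟩` vanishes at `X = A_t`. Along the segment this defect is an
affine function of `t`. Since `[0, ε]` is infinite and there are finitely many candidates, one
candidate has two distinct zeros, so its defect vanishes identically, in particular at `t = 1`:
the ratio of that candidate at `B` equals `L`, whence `L ≤ λ(B)`.
-/

open Finset

theorem sum_segment_mul {n : Type*} [Fintype n] (A B v : n → ℝ) (t : ℝ) :
    ∑ j, (t * B j + (1 - t) * A j) * v j = t * ∑ j, B j * v j + (1 - t) * ∑ j, A j * v j := by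
  simp only [mul_sum, ← sum_add_distrib]
  exact sum_congr rfl fun j _ => by ring

theorem sum_segment_mul_pos {n : Type*} [Fintype n] {A B v : n → ℝ} {t : ℝ} (ht₀ : 0 ≤ t) (ht₁ : t ≤ 1)
    (hA : 0 < ∑ j, A j * v j) (hB : 0 < ∑ j, B j * v j) :
    0 < ∑ j, (t * B j + (1 - t) * A j) * v j := by
  rw [sum_segment_mul]
  rcases ht₀.eq_or_lt with rfl | ht
  · simpa using hA
  · exact add_pos_of_pos_of_nonneg (mul_pos ht hB) (mul_nonneg (sub_nonneg.2 ht₁) hA.le)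

theorem eq_zero_of_segment_eq_zero_of_ne {a b s t : ℝ} (hst : s ≠ t)
    (hs : s * b + (1 - s) * a = 0) (ht : t * b + (1 - t) * a = 0) : b = 0 := by
  have hab : (s - t) * (b - a) = 0 := by linear_combination hs - ht
  have hba : b = a := by
    simpa [sub_eq_zero, hst] using hab
  subst hba
  linear_combination hs

section lamFun

variable {k : ℕ} {ι : Type} [Fintype ι] [Nonempty ι] (γ η : ι → Fin k → ℝ)

theorem exists_sum_mul_eq_lamFun_mul (X : Fin k → ℝ) (hX : ∀ i, 0 < ∑ j, X j * γ i j) :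
    ∃ i, ∑ j, X j * η i j = lamFun γ η X * ∑ j, X j * γ i j := by
  obtain ⟨i, -, hi⟩ := exists_mem_eq_sup' univ_nonempty
    fun i => (∑ j, X j * η i j) / (∑ j, X j * γ i j)
  exact ⟨i, (div_eq_iff (hX i).ne').1 (by rw [lamFun, hi])⟩

theorem le_lamFun_of_sum_mul_eq_mul (X : Fin k → ℝ) (hX : ∀ i, 0 < ∑ j, X j * γ i j)
    {L : ℝ} {i : ι} (h : ∑ j, X j * η i j = L * ∑ j, X j * γ i j) : L ≤ lamFun γ η X := by
  have hL : L = (∑ j, X j * η i j) / (∑ j, X j * γ i j) := by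
    rw [h, mul_div_assoc, div_self (hX i).ne', mul_one]
  rw [hL]
  exact le_sup' (fun i => (∑ j, X j * η i j) / (∑ j, X j * γ i j)) (mem_univ i)

end lamFun

theorem displacement_locally_constant_implies_le_general
    (k : ℕ) (ι : Type) [Fintype ι] [Nonempty ι]
    (γ η : ι → Fin k → ℝ) (A B : Fin k → ℝ)
    (hA : ∀ i : ι, 0 < ∑ j, A j * γ i j)
    (hB : ∀ i : ι, 0 < ∑ j, B j * γ i j)
    (hconst : ∃ ε : ℝ, ε ∈ Set.Ioc (0:ℝ) 1 ∧
      ∀ t ∈ Set.Icc (0:ℝ) ε,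
        lamFun γ η (fun j => t * B j + (1 - t) * A j) = lamFun γ η A) :
    lamFun γ η A ≤ lamFun γ η B := by
  obtain ⟨ε, ⟨hε₀, hε₁⟩, hconst⟩ := hconst
  set L := lamFun γ η A
  have hdefect : ∀ t : Set.Icc 0 ε, ∃ i, (t : ℝ) * (∑ j, B j * η i j - L * ∑ j, B j * γ i j)
      + (1 - t) * (∑ j, A j * η i j - L * ∑ j, A j * γ i j) = 0 := by
    rintro ⟨t, ht₀, htε⟩
    obtain ⟨i, hi⟩ := exists_sum_mul_eq_lamFun_mul γ η (fun j => t * B j + (1 - t) * A j)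
      fun i => sum_segment_mul_pos ht₀ (htε.trans hε₁) (hA i) (hB i)
    rw [hconst t ⟨ht₀, htε⟩, sum_segment_mul, sum_segment_mul] at hi
    exact ⟨i, by linear_combination hi⟩
  choose idx hidx using hdefect
  have : Infinite (Set.Icc 0 ε) := (Set.Icc_infinite hε₀).to_subtype
  obtain ⟨s, t, hst, hidx_eq⟩ := Finite.exists_ne_map_eq_of_infinite idx
  have hB_defect := eq_zero_of_segment_eq_zero_of_ne (Subtype.coe_ne_coe.2 hst) (hidx s)
    (hidx_eq ▸ hidx t)
  exact le_lamFun_of_sum_mul_eq_mul γ η B hB (sub_eq_zero.1 hB_defect)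

/-- If the displacement function `λ` is constant equal to `λ(A)` on an initial
segment `[0,ε]` of the segment `A_t = t•B + (1-t)•A`, then `λ(A) ≤ λ(B)`.
Equivalently, if `λ(A) > λ(B)` then `λ` is not locally constant near `A`. -/
theorem displacement_locally_constant_implies_le
    (k : ℕ) (hk : 1 ≤ k) (ι : Type) [Fintype ι] [Nonempty ι]
    (γ η : ι → Fin k → ℝ) (A B : Fin k → ℝ)
    (hA : ∀ i : ι, 0 < ∑ j, A j * γ i j)
    (hB : ∀ i : ι, 0 < ∑ j, B j * γ i j)
    (hconst : ∃ ε : ℝ, ε ∈ Set.Ioc (0:ℝ) 1 ∧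
      ∀ t ∈ Set.Icc (0:ℝ) ε,
        lamFun γ η (fun j => t * B j + (1 - t) * A j) = lamFun γ η A) :
    lamFun γ η A ≤ lamFun γ η B :=
  displacement_locally_constant_implies_le_general k ι γ η A B hA hB hconst
end

section
/- Let k ≥ 1 and let ι be a finite nonempty index set. Let γ_i, η_i : Fin k → ℝ have nonnegative entries with γ_i ≠ 0 for each i ∈ ι. For X : Fin k → ℝ with all entries positive define λ(X) = max over i ∈ ι of ⟨X,η_i⟩/⟨X,γ_i⟩. If X₀ has all entries positive and is a local minimum of λ on the open positive cone (i.e. there is an open set U containing X₀ such that λ(X₀) ≤ λ(Y) for every Y ∈ U with all entries positive), then λ(X₀) ≤ λ(Y) for every Y : Fin k → ℝ with all entries positive. -/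
open Finset

/-!
Along the segment `t ↦ (1 - t) • X₀ + t • Y` each ratio `⟨Z,η i⟩/⟨Z,γ i⟩` is a mediant of its
values at the endpoints, with positive weight on the one at `Y`. So if `λ(Y) < λ(X₀)`, every
point of the segment other than `X₀` has `λ < λ(X₀)`, and such points lie in any neighbourhood
of `X₀`.
-/

open Filter Topology AffineMap

theorem dotProduct_pos_of_pos_of_nonneg {n : Type*} [Fintype n] {x v : n → ℝ}
    (hx : ∀ j, 0 < x j) (hv : ∀ j, 0 ≤ v j) (hv₀ : v ≠ 0) : 0 < x ⬝ᵥ v := by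
  obtain ⟨j, hj⟩ := Function.ne_iff.1 hv₀
  exact sum_pos' (fun j _ => mul_nonneg (hx j).le (hv j))
    ⟨j, mem_univ j, mul_pos (hx j) ((hv j).lt_of_ne' hj)⟩

theorem mediant_lt {a b c d s t L : ℝ} (hc : 0 < c) (hd : 0 < d) (hs : 0 ≤ s) (ht : 0 < t)
    (ha : a / c ≤ L) (hb : b / d < L) : (s * a + t * b) / (s * c + t * d) < L := by
  rw [div_le_iff₀ hc] at ha
  rw [div_lt_iff₀ hd] at hb
  rw [div_lt_iff₀ (by positivity)]
  nlinarith [mul_le_mul_of_nonneg_left ha hs, mul_lt_mul_of_pos_left hb ht]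

theorem lineMap_dotProduct {n : Type*} [Fintype n] (x y v : n → ℝ) (t : ℝ) :
    lineMap x y t ⬝ᵥ v = (1 - t) * (x ⬝ᵥ v) + t * (y ⬝ᵥ v) := by
  rw [lineMap_apply_module, add_dotProduct, smul_dotProduct, smul_dotProduct, smul_eq_mul,
    smul_eq_mul]

theorem lineMap_pos {n : Type*} {x y : n → ℝ} (hx : ∀ j, 0 < x j) (hy : ∀ j, 0 < y j)
    {t : ℝ} (ht₀ : 0 ≤ t) (ht₁ : t ≤ 1) (j : n) : 0 < lineMap x y t j := by
  rw [lineMap_apply_module]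
  exact convex_Ioi (0 : ℝ) (hx j) (hy j) (sub_nonneg.2 ht₁) ht₀ (sub_add_cancel 1 t)

theorem exists_lineMap_mem_of_mem_nhds {E : Type*} [AddCommGroup E] [Module ℝ E]
    [TopologicalSpace E] [IsTopologicalAddGroup E] [ContinuousSMul ℝ E] {U : Set E} {x : E}
    (hU : U ∈ 𝓝 x) (y : E) : ∃ t ∈ Set.Ioc (0 : ℝ) 1, lineMap x y t ∈ U := by
  have hmem : ∀ᶠ t : ℝ in 𝓝[>] 0, lineMap x y t ∈ U :=
    lineMap_continuous.continuousWithinAt.eventually_mem (by simpa using hU)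
  obtain ⟨t, ht, htU⟩ := (hmem.and (Ioc_mem_nhdsGT zero_lt_one)).exists
  exact ⟨t, htU, ht⟩

section Displacement

variable {k : ℕ} {ι : Type} [Fintype ι] [Nonempty ι] {γ η : ι → Fin k → ℝ}

theorem lamFun_eq_sup' (X : Fin k → ℝ) :
    lamFun γ η X = univ.sup' univ_nonempty (fun i => (X ⬝ᵥ η i) / (X ⬝ᵥ γ i)) :=
  rfl

theorem lamFun_lineMap_lt (hγ : ∀ i j, 0 ≤ γ i j) (hγ₀ : ∀ i, γ i ≠ 0)
    {X Y : Fin k → ℝ} (hX : ∀ j, 0 < X j) (hY : ∀ j, 0 < Y j)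
    (hXY : lamFun γ η Y < lamFun γ η X) {t : ℝ} (ht₀ : 0 < t) (ht₁ : t ≤ 1) :
    lamFun γ η (lineMap X Y t) < lamFun γ η X := by
  rw [lamFun_eq_sup' (lineMap X Y t), sup'_lt_iff]
  intro i _
  rw [lineMap_dotProduct, lineMap_dotProduct]
  exact mediant_lt (dotProduct_pos_of_pos_of_nonneg hX (hγ i) (hγ₀ i))
    (dotProduct_pos_of_pos_of_nonneg hY (hγ i) (hγ₀ i)) (sub_nonneg.2 ht₁) ht₀
    (le_sup' (fun i => (X ⬝ᵥ η i) / (X ⬝ᵥ γ i)) (mem_univ i))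
    ((le_sup' (fun i => (Y ⬝ᵥ η i) / (Y ⬝ᵥ γ i)) (mem_univ i)).trans_lt hXY)

end Displacement

theorem displacement_local_min_is_global_min_general
    (k : ℕ) (ι : Type) [Fintype ι] [Nonempty ι]
    (γ η : ι → Fin k → ℝ)
    (hγnn : ∀ i j, 0 ≤ γ i j) (hγne : ∀ i : ι, γ i ≠ 0)
    (X₀ : Fin k → ℝ) (hX₀ : ∀ j, 0 < X₀ j)
    (U : Set (Fin k → ℝ)) (hU : IsOpen U) (hX₀U : X₀ ∈ U)
    (hmin : ∀ Y ∈ U, (∀ j, 0 < Y j) → lamFun γ η X₀ ≤ lamFun γ η Y) :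
    ∀ Y : Fin k → ℝ, (∀ j, 0 < Y j) → lamFun γ η X₀ ≤ lamFun γ η Y := by
  intro Y hY
  by_contra! hlt
  obtain ⟨t, ⟨ht₀, ht₁⟩, htU⟩ := exists_lineMap_mem_of_mem_nhds (hU.mem_nhds hX₀U) Y
  exact (hmin _ htU (lineMap_pos hX₀ hY ht₀.le ht₁)).not_gt
    (lamFun_lineMap_lt hγnn hγne hX₀ hY hlt ht₀ ht₁)

/-- Local minima of the displacement function on the open positive cone are
global minima. -/
theorem displacement_local_min_is_global_min
    (k : ℕ) (hk : 1 ≤ k) (ι : Type) [Fintype ι] [Nonempty ι]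
    (γ η : ι → Fin k → ℝ)
    (hγnn : ∀ i j, 0 ≤ γ i j) (hγne : ∀ i : ι, γ i ≠ 0)
    (hηnn : ∀ i j, 0 ≤ η i j)
    (X₀ : Fin k → ℝ) (hX₀ : ∀ j, 0 < X₀ j)
    (U : Set (Fin k → ℝ)) (hU : IsOpen U) (hX₀U : X₀ ∈ U)
    (hmin : ∀ Y ∈ U, (∀ j, 0 < Y j) → lamFun γ η X₀ ≤ lamFun γ η Y) :
    ∀ Y : Fin k → ℝ, (∀ j, 0 < Y j) → lamFun γ η X₀ ≤ lamFun γ η Y :=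
  displacement_local_min_is_global_min_general k ι γ η hγnn hγne X₀ hX₀ U hU hX₀U hmin
end

section
/- Let S be a nonempty type, let Λ : S → S → ℝ be a multiplicative stretching factor (Λ x y > 0 for all x, y, and Λ x z ≤ Λ x y * Λ y z for all x, y, z), and let φ : S → S be Λ-isometric (Λ (φ x) (φ y) = Λ x y for all x, y). Suppose there exist X ∈ S, real numbers A > 0 and k ≥ 0, and N ∈ ℕ such that A·kⁿ ≤ Λ X (φ^[n] X) for every n ≥ N (φ^[n] denoting the n-fold iterate of φ). Then k ≤ Λ Y (φ Y) for every Y ∈ S. -/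
/-- Lemma 7.6 of the paper: if `Λ` is a multiplicative stretching factor on `S`
(positive and satisfying the multiplicative triangle inequality), `φ` acts
`Λ`-isometrically, and `A·kⁿ ≤ Λ(X, φⁿX)` for all large `n`, then
`k ≤ Λ(Y, φY)` for every `Y`. -/
theorem growth_bounds_displacement
    (S : Type) [Nonempty S] (Λ : S → S → ℝ)
    (hpos : ∀ x y : S, 0 < Λ x y)
    (htri : ∀ x y z : S, Λ x z ≤ Λ x y * Λ y z)
    (φ : S → S) (hiso : ∀ x y : S, Λ (φ x) (φ y) = Λ x y)
    (X : S) (A k : ℝ) (hA : 0 < A) (hk : 0 ≤ k) (N : ℕ)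
    (hgrow : ∀ n : ℕ, N ≤ n → A * k ^ n ≤ Λ X (φ^[n] X)) :
    ∀ Y : S, k ≤ Λ Y (φ Y) := by
  intro Y
  set d := Λ Y (φ Y) with hd
  have hdpos : 0 < d := hpos _ _
  -- iterated isometry
  have hison : ∀ (n : ℕ) (a b : S), Λ (φ^[n] a) (φ^[n] b) = Λ a b := by
    intro n
    induction n with
    | zero => simp
    | succ m ih =>
      intro a b
      simp only [Function.iterate_succ_apply', hiso, ih]
  -- displacement of iterates (for n ≥ 1)
  have hdisp : ∀ n : ℕ, Λ Y (φ^[n+1] Y) ≤ d ^ (n+1) := by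
    intro n
    induction n with
    | zero => simp [hd]
    | succ m ih =>
      calc Λ Y (φ^[m+1+1] Y) ≤ Λ Y (φ Y) * Λ (φ Y) (φ^[m+1+1] Y) := htri _ _ _
        _ = d * Λ Y (φ^[m+1] Y) := by
            rw [show (m+1+1) = (m+1)+1 from rfl, Function.iterate_succ_apply' φ (m+1) Y, hiso]
        _ ≤ d * d ^ (m+1) := mul_le_mul_of_nonneg_left ih hdpos.le
        _ = d ^ (m+1+1) := by ring
  set C := Λ X Y * Λ Y X with hC
  have hCpos : 0 < C := mul_pos (hpos _ _) (hpos _ _)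
  -- key bound
  have hkey : ∀ n : ℕ, N ≤ n + 1 → A * k ^ (n+1) ≤ C * d ^ (n+1) := by
    intro n hn
    have h1 : Λ X (φ^[n+1] X) ≤ Λ X Y * (Λ Y (φ^[n+1] Y) * Λ (φ^[n+1] Y) (φ^[n+1] X)) := by
      calc Λ X (φ^[n+1] X) ≤ Λ X Y * Λ Y (φ^[n+1] X) := htri _ _ _
        _ ≤ Λ X Y * (Λ Y (φ^[n+1] Y) * Λ (φ^[n+1] Y) (φ^[n+1] X)) :=
            mul_le_mul_of_nonneg_left (htri _ _ _) (hpos X Y).le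
    rw [hison (n+1) Y X] at h1
    have h2 : Λ X Y * (Λ Y (φ^[n+1] Y) * Λ Y X) ≤ Λ X Y * (d ^ (n+1) * Λ Y X) := by
      have := hdisp n
      nlinarith [hpos X Y, hpos Y X]
    calc A * k ^ (n+1) ≤ Λ X (φ^[n+1] X) := hgrow (n+1) hn
      _ ≤ Λ X Y * (d ^ (n+1) * Λ Y X) := h1.trans h2
      _ = C * d ^ (n+1) := by ring
  by_contra hlt
  push_neg at hlt
  have hr : 1 < k / d := (one_lt_div hdpos).mpr hlt
  obtain ⟨n₀, hn₀⟩ := pow_unbounded_of_one_lt (C / A) hr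
  set m := n₀ + N + 1 with hm
  have hmono : (k / d) ^ n₀ ≤ (k / d) ^ m :=
    pow_le_pow_right₀ hr.le (by omega)
  have hbig : C / A < (k / d) ^ m := lt_of_lt_of_le hn₀ hmono
  have hkd : (k / d) ^ m = k ^ m / d ^ m := div_pow k d m
  have hdm : 0 < d ^ m := pow_pos hdpos m
  have hkey' : A * k ^ m ≤ C * d ^ m := by
    have : m = (n₀ + N) + 1 := by omega
    rw [this]
    exact hkey (n₀ + N) (by omega)
  have : (k / d) ^ m ≤ C / A := by
    rw [hkd, div_le_div_iff₀ hdm hA]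
    nlinarith
  linarith
end

section
/- Let k ≥ 1, let v : Fin k → ℝ satisfy v i > 0 for every i, and let D be a finite set of positive real numbers. Then the set S = { ⟨m,v⟩ / d : m : Fin k → ℕ, d ∈ D } ⊆ ℝ is well-ordered by the strict order <, i.e. every nonempty subset of S has a least element. -/
/-- Well-ordering of the displacement spectrum (the mechanism behind
Theorem 7.2 of the paper): if all `v i > 0` and `D` is a finite set of positive
reals, then `S = {⟨m,v⟩/d : m : Fin k → ℕ, d ∈ D}` is well-ordered by `<`,
i.e. every nonempty subset of `S` has a least element. -/
theorem displacement_set_wellOrdered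
    (k : ℕ) (hk : 1 ≤ k) (v : Fin k → ℝ) (hv : ∀ i, 0 < v i)
    (D : Finset ℝ) (hD : ∀ d ∈ D, (0:ℝ) < d)
    (S : Set ℝ)
    (hS : S = { s : ℝ | ∃ m : Fin k → ℕ, ∃ d ∈ D, s = (∑ i, (m i : ℝ) * v i) / d }) :
    ∀ T ⊆ S, T.Nonempty → ∃ a ∈ T, ∀ b ∈ T, a ≤ b := by
  intro T hTS hTne
  obtain ⟨b, hbT⟩ := hTne
  -- find a uniform bound M on the multiplicities of elements ≤ b
  obtain ⟨M, hM⟩ : ∃ M : ℕ, ∀ d ∈ D, ∀ i : Fin k, b * d / v i ≤ (M : ℝ) := by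
    by_cases hDe : D.Nonempty
    · have hA : ((D ×ˢ (Finset.univ : Finset (Fin k))).image
          (fun p => b * p.1 / v p.2)).Nonempty := by
        apply Finset.Nonempty.image
        haveI : Nonempty (Fin k) := ⟨⟨0, hk⟩⟩
        exact Finset.Nonempty.product hDe Finset.univ_nonempty
      set A := (D ×ˢ (Finset.univ : Finset (Fin k))).image (fun p => b * p.1 / v p.2) with hAdef
      obtain ⟨M, hM⟩ := exists_nat_ge (A.max' hA)
      refine ⟨M, fun d hd i => ?_⟩
      have : b * d / v i ∈ A := by
        apply Finset.mem_image.mpr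
        exact ⟨(d, i), by simp [hd]⟩
      exact le_trans (Finset.le_max' A _ this) hM
    · exact ⟨0, fun d hd => absurd ⟨d, hd⟩ hDe⟩
  -- the set of elements of T below b is finite
  have hfin : (T ∩ {x | x ≤ b}).Finite := by
    have : (T ∩ {x | x ≤ b}) ⊆ Set.range
        (fun p : (Fin k → Fin (M + 1)) × D =>
          (∑ i, ((p.1 i : ℕ) : ℝ) * v i) / (p.2 : ℝ)) := by
      rintro x ⟨hxT, hxb⟩
      have hxS := hTS hxT
      rw [hS] at hxS
      obtain ⟨m, d, hd, hx⟩ := hxS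
      have hd0 := hD d hd
      have hmle : ∀ i, m i ≤ M := by
        intro i
        have h1 : (m i : ℝ) * v i ≤ ∑ j, (m j : ℝ) * v j := by
          apply Finset.single_le_sum (f := fun j => (m j : ℝ) * v j)
          · intro j _; exact mul_nonneg (Nat.cast_nonneg _) (hv j).le
          · exact Finset.mem_univ i
        have h2 : ∑ j, (m j : ℝ) * v j ≤ b * d := by
          have hxb' : x ≤ b := hxb
          have hxd : (∑ j, (m j : ℝ) * v j) / d ≤ b := hx ▸ hxb'
          have := (div_le_iff₀ hd0).mp hxd
          linarith
        have h3 : (m i : ℝ) ≤ b * d / v i := by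
          rw [le_div_iff₀ (hv i)]; linarith
        have h4 : (m i : ℝ) ≤ (M : ℝ) := le_trans h3 (hM d hd i)
        exact_mod_cast h4
      refine ⟨(fun i => ⟨m i, Nat.lt_succ_of_le (hmle i)⟩, ⟨d, hd⟩), ?_⟩
      simp [hx]
    exact Set.Finite.subset (Set.finite_range _) this
  have hne : (T ∩ {x | x ≤ b}).Nonempty := ⟨b, hbT, le_refl b⟩
  obtain ⟨a, haT, ha⟩ := Set.exists_min_image (T ∩ {x | x ≤ b}) id hfin hne
  refine ⟨a, haT.1, fun c hc => ?_⟩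
  by_cases hcb : c ≤ b
  · exact ha c ⟨hc, hcb⟩
  · exact le_trans haT.2 (le_of_not_ge hcb)
end

section
/- Let n ≥ 1 and let φ be an automorphism of the free group F = FreeGroup (Fin n). Then there exists g ∈ F with g ≠ 1 and cyclically reduced length ‖g‖ ≤ 2 such that for every h ∈ F with h ≠ 1 one has ‖φ h‖ · ‖g‖ ≤ ‖φ g‖ · ‖h‖. In other words, the supremum defining ‖φ‖_B = sup_{1 ≠ h} ‖φ h‖/‖h‖ is a maximum and is realized by an element of cyclically reduced length at most 2. -/
/-!
Subdivide every edge of the rose into four (the monomorphism `x ↦ x⁴`), so that the base point of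
an optimal map can be taken at a vertex. For a vertex `p` of the subdivided tree, consider the map
of the subdivided rose sending the base vertex to `p`; the edge `l` goes to the loop
`p⁻¹ * (φ l)⁴ * p`, and if `λ` is the largest length of these loops then `4 ‖φ h‖ ≤ λ ‖h‖` for
every `h`. Choose `p` minimizing `λ`. If two letters `a`, `b` with `b ≠ a⁻¹` both realize `λ` and
their loops can be concatenated cyclically without cancellation, then `4 ‖φ (a b)‖ = 2 λ` and
`g = a b` realizes the supremum. Otherwise all the loops of length `λ` begin with the same letter
`e` and end with `e⁻¹`, and moving `p` one step along `e` strictly decreases `λ`: the loops of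
length `λ` shrink by `2`, and along each edge of the unsubdivided tree every loop length is affine
with slope `-2`, `0` or `2` and divisible by `4` at the vertices, which keeps the others from
catching up.
-/

/-- The cyclically reduced length of an element of the free group on `Fin n`:
the minimum over all conjugates of the word length (`FreeGroup.norm`). -/
noncomputable def cyclen {n : ℕ} (g : FreeGroup (Fin n)) : ℕ :=
  sInf { l : ℕ | ∃ x : FreeGroup (Fin n), l = (x * g * x⁻¹).norm }

namespace FreeGroup

variable {α : Type*}

def letterInv (x : α × Bool) : α × Bool := (x.1, !x.2)

@[simp]
theorem letterInv_letterInv (x : α × Bool) : letterInv (letterInv x) = x := by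
  simp [letterInv]

theorem letterInv_ne_self (x : α × Bool) : letterInv x ≠ x := by
  simp [letterInv, Prod.ext_iff]

theorem rel_iff_ne_letterInv {a b : α × Bool} :
    (a.1 = b.1 → a.2 = b.2) ↔ b ≠ letterInv a := by
  obtain ⟨a, s⟩ := a
  obtain ⟨b, t⟩ := b
  cases s <;> cases t <;> simp [letterInv, eq_comm]

theorem inv_mk_singleton (x : α × Bool) : (mk [x])⁻¹ = mk [letterInv x] := by
  simp [inv_mk, invRev, letterInv]

theorem mk_replicate (m : ℕ) (x : α × Bool) : mk (List.replicate m x) = mk [x] ^ m := by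
  rw [pow_mk, List.flatten_replicate_singleton]

theorem mk_replicate_letterInv (m : ℕ) (x : α × Bool) :
    mk (List.replicate m (letterInv x)) = (mk [x] ^ m)⁻¹ := by
  rw [mk_replicate, ← inv_mk_singleton, inv_pow]

theorem head?_invRev (L : List (α × Bool)) : (invRev L).head? = L.getLast?.map letterInv := by
  simp [invRev, List.getLast?_map]
  rfl

theorem isCyclicallyReduced_append {A B : List (α × Bool)} (hA : IsReduced A) (hB : IsReduced B)
    {a a' b b' : α × Bool} (ha : A.head? = some a) (ha' : A.getLast? = some a')
    (hb : B.head? = some b) (hb' : B.getLast? = some b') (hab : b ≠ letterInv a')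
    (hba : a ≠ letterInv b') : IsCyclicallyReduced (A ++ B) := by
  have hA₀ : A ≠ [] := by rintro rfl; simp at ha
  have hB₀ : B ≠ [] := by rintro rfl; simp at hb
  refine ⟨List.isChain_append.2 ⟨hA, hB, ?_⟩, ?_⟩
  · simpa [ha', hb, rel_iff_ne_letterInv] using hab
  · rw [List.getLast?_append_of_ne_nil _ hB₀, List.head?_append_of_ne_nil _ hA₀, hb', ha]
    simpa [rel_iff_ne_letterInv] using hba

theorem isCyclicallyReduced_pair {a b : α × Bool} (h : b ≠ letterInv a) :
    IsCyclicallyReduced [a, b] :=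
  isCyclicallyReduced_append (b := b) (b' := b) .singleton .singleton rfl rfl rfl rfl h
    fun hab => h (by rw [hab, letterInv_letterInv])

theorem IsCyclicallyReduced.isReduced_append_self {L : List (α × Bool)}
    (h : IsCyclicallyReduced L) : IsReduced (L ++ L) := by
  simpa using (h.flatten_replicate 2).isReduced

section DecidableEq

variable [DecidableEq α]

theorem toWord_mk_of_isReduced {L : List (α × Bool)} (h : IsReduced L) : toWord (mk L) = L := by
  rw [toWord_mk, h.reduce_eq]

theorem norm_mk_of_isReduced {L : List (α × Bool)} (h : IsReduced L) :
    norm (mk L) = L.length := by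
  rw [norm, toWord_mk_of_isReduced h]

theorem norm_pow_le (z : FreeGroup α) (m : ℕ) : norm (z ^ m) ≤ m * norm z := by
  induction m with
  | zero => simp
  | succ m ih =>
    rw [pow_succ, add_one_mul]
    exact (norm_mul_le _ _).trans (by omega)

theorem norm_pow_of_isCyclicallyReduced {L : List (α × Bool)} (h : IsCyclicallyReduced L)
    (m : ℕ) : norm (mk L ^ m) = m * L.length := by
  rw [pow_mk, norm_mk_of_isReduced (h.flatten_replicate m).isReduced]
  simp

-- The powers of `mk L` have the full length `m * L.length`, while conjugating them by `q` changes
-- their length by at most `2 * norm q`.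
theorem length_le_norm_conj_of_isCyclicallyReduced {L : List (α × Bool)}
    (h : IsCyclicallyReduced L) (q : FreeGroup α) : L.length ≤ norm (q * mk L * q⁻¹) := by
  have hpow (m : ℕ) : m * L.length ≤ 2 * norm q + m * norm (q * mk L * q⁻¹) := by
    have hconj : q⁻¹ * (q * mk L * q⁻¹) ^ m * q = mk L ^ m := by
      rw [conj_pow]
      group
    calc m * L.length = norm (q⁻¹ * (q * mk L * q⁻¹) ^ m * q) := by
          rw [hconj, norm_pow_of_isCyclicallyReduced h]
      _ ≤ norm q⁻¹ + norm ((q * mk L * q⁻¹) ^ m) + norm q :=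
          (norm_mul_le _ _).trans (Nat.add_le_add_right (norm_mul_le _ _) _)
      _ ≤ 2 * norm q + m * norm (q * mk L * q⁻¹) := by
          rw [norm_inv_eq]
          linarith [norm_pow_le (q * mk L * q⁻¹) m]
  by_contra! hlt
  nlinarith [hpow (2 * norm q + 1)]

theorem exists_conj_eq_mk_isCyclicallyReduced (g : FreeGroup α) :
    ∃ x L, IsCyclicallyReduced L ∧ x * g * x⁻¹ = mk L := by
  obtain ⟨C, L, hL, hg⟩ : ∃ C L, IsCyclicallyReduced L ∧ mk C * mk L * (mk C)⁻¹ = g :=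
    ⟨_, _, reduceCyclically.isCyclicallyReduced isReduced_toWord, by
      rw [inv_mk, mul_mk, mul_mk, reduceCyclically.conj_conjugator_reduceCyclically, mk_toWord]⟩
  exact ⟨(mk C)⁻¹, L, hL, by rw [← hg]; group⟩

theorem norm_conj_add_two_of_head?_of_getLast? {V : FreeGroup α} {e : α × Bool}
    (hhead : (toWord V).head? = some e) (hlast : (toWord V).getLast? = some (letterInv e)) :
    norm ((mk [e])⁻¹ * V * mk [e]) + 2 = norm V := by
  obtain ⟨_ | ⟨y, M⟩, hM⟩ := List.getLast?_eq_some_iff.1 hlast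
  · simp [hM, letterInv_ne_self] at hhead
  obtain rfl : e = y := by simpa [hM, eq_comm] using hhead
  replace hM : toWord V = [e] ++ M ++ [letterInv e] := hM
  have hMred : IsReduced M := (hM ▸ isReduced_toWord).infix ⟨[e], [letterInv e], rfl⟩
  have hV : (mk [e])⁻¹ * V * mk [e] = mk M := by
    rw [← mk_toWord (x := V), hM, ← mul_mk, ← mul_mk, ← inv_mk_singleton]
    group
  rw [hV, norm_mk_of_isReduced hMred, norm, hM]
  simp

end DecidableEq

def subdivWord (k : ℕ) (L : List (α × Bool)) : List (α × Bool) := L.flatMap (List.replicate k)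

section SubdivWord

variable {k : ℕ} {L : List (α × Bool)}

@[simp]
theorem subdivWord_nil : subdivWord k ([] : List (α × Bool)) = [] := rfl

@[simp]
theorem subdivWord_cons (a : α × Bool) (L : List (α × Bool)) :
    subdivWord k (a :: L) = List.replicate k a ++ subdivWord k L := rfl

@[simp]
theorem subdivWord_append (L₁ L₂ : List (α × Bool)) :
    subdivWord k (L₁ ++ L₂) = subdivWord k L₁ ++ subdivWord k L₂ := List.flatMap_append

@[simp]
theorem subdivWord_zero (L : List (α × Bool)) : subdivWord 0 L = [] := by
  simp [subdivWord]

@[simp]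
theorem length_subdivWord : (subdivWord k L).length = k * L.length := by
  induction L with
  | nil => rfl
  | cons a L ih => simp [ih, Nat.mul_succ, Nat.add_comm]

theorem head?_subdivWord (hk : k ≠ 0) : (subdivWord k L).head? = L.head? := by
  cases L <;> simp [hk, List.head?_replicate]

theorem getLast?_subdivWord (hk : k ≠ 0) : (subdivWord k L).getLast? = L.getLast? := by
  induction L with
  | nil => rfl
  | cons a L ih =>
    cases L with
    | nil => simp [hk, List.getLast?_replicate]
    | cons b L =>
      rw [subdivWord_cons, List.getLast?_append_of_ne_nil _ (by simp [hk]), ih,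
        List.getLast?_cons_cons]

theorem IsReduced.subdivWord (h : IsReduced L) : IsReduced (subdivWord k L) := by
  induction L with
  | nil => exact .nil
  | cons a L ih =>
    rw [subdivWord_cons]
    refine List.isChain_append.2 ⟨List.isChain_replicate_of_rel _ fun _ => rfl, ih h.tail, ?_⟩
    intro x hx y hy
    have hk : k ≠ 0 := by rintro rfl; simp at hx
    rw [head?_subdivWord hk] at hy
    obtain rfl := List.eq_of_mem_replicate (List.mem_of_mem_getLast? hx)
    cases L with
    | nil => simp at hy
    | cons b L =>
      obtain rfl : b = y := by simpa using hy
      exact (List.isChain_cons_cons.1 h).1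

theorem IsCyclicallyReduced.subdivWord (h : IsCyclicallyReduced L) :
    IsCyclicallyReduced (subdivWord k L) := by
  rcases Nat.eq_zero_or_pos k with rfl | hk
  · simp [IsCyclicallyReduced.nil]
  exact ⟨h.isReduced.subdivWord, by
    rw [getLast?_subdivWord hk.ne', head?_subdivWord hk.ne']; exact h.2⟩

end SubdivWord

section Subdivide

def subdivide (k : ℕ) : FreeGroup α →* FreeGroup α := lift fun a => of a ^ k

variable {k : ℕ}

theorem subdivide_mk_singleton (x : α × Bool) : subdivide k (mk [x]) = mk [x] ^ k := by
  obtain ⟨a, _ | _⟩ := x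
  · rw [show mk [(a, false)] = (of a)⁻¹ by simp [of, inv_mk, invRev], _root_.map_inv, subdivide,
      lift_apply_of, inv_pow]
  · exact lift_apply_of

theorem subdivide_mk (L : List (α × Bool)) : subdivide k (mk L) = mk (subdivWord k L) := by
  induction L with
  | nil => simp [← one_eq_mk]
  | cons a L ih =>
    rw [← List.singleton_append, ← mul_mk, _root_.map_mul, ih, subdivide_mk_singleton,
      ← mk_replicate, mul_mk]
    rfl

theorem toWord_subdivide [DecidableEq α] (z : FreeGroup α) :
    toWord (subdivide k z) = subdivWord k (toWord z) := by
  rw [← mk_toWord (x := z), subdivide_mk, toWord_mk_of_isReduced isReduced_toWord.subdivWord,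
    mk_toWord]

end Subdivide

section EdgeProfile

variable [DecidableEq α] {k j : ℕ} {h : FreeGroup α} {x : α × Bool}

-- In each case the reduced word of the conjugate is an infix of a reduced word at hand: of
-- `subdivWord k (toWord h)`, of its square, or of `subdivWord k (x⁻¹ :: toWord h ++ [x])`.
open List in
theorem norm_conj_pow_subdivide_of_head_of_getLast (hhead : (toWord h).head? = some x)
    (hlast : (toWord h).getLast? = some (letterInv x)) (hj : j ≤ k) :
    norm ((mk [x] ^ j)⁻¹ * subdivide k h * mk [x] ^ j) + 2 * j = k * norm h ∧
      (j < k → (toWord ((mk [x] ^ j)⁻¹ * subdivide k h * mk [x] ^ j)).head? = some x) := by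
  obtain ⟨_ | ⟨y, M⟩, hM⟩ := getLast?_eq_some_iff.1 hlast
  · simp [hM, letterInv_ne_self] at hhead
  obtain rfl : x = y := by simpa [hM, eq_comm] using hhead
  obtain ⟨d, rfl⟩ := Nat.exists_eq_add_of_le hj
  set E := replicate d x ++ subdivWord (j + d) M ++ replicate d (letterInv x)
  have hW : toWord (subdivide (j + d) h) = replicate j x ++ E ++ replicate j (letterInv x) := by
    have : replicate (j + d) (letterInv x) =
        replicate d (letterInv x) ++ replicate j (letterInv x) := by
      rw [Nat.add_comm, replicate_add]
    simp only [toWord_subdivide, hM, cons_append, subdivWord_cons, subdivWord_append,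
      subdivWord_nil, append_nil, this, replicate_add j d x, E, append_assoc]
  have hE : IsReduced E := (hW ▸ isReduced_toWord).infix ⟨_, _, rfl⟩
  have hz : (mk [x] ^ j)⁻¹ * subdivide (j + d) h * mk [x] ^ j = mk E := by
    rw [← mk_toWord (x := subdivide _ h), hW, ← mul_mk, ← mul_mk, mk_replicate,
      mk_replicate_letterInv]
    group
  rw [hz, norm_mk_of_isReduced hE, toWord_mk_of_isReduced hE, norm, hM]
  refine ⟨by simp [E]; ring, fun hd => ?_⟩
  simp [E, head?_replicate, show d ≠ 0 by omega]

open List in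
theorem norm_conj_pow_subdivide_of_head_of_not_getLast (hhead : (toWord h).head? = some x)
    (hlast : (toWord h).getLast? ≠ some (letterInv x)) (hj : j ≤ k) :
    norm ((mk [x] ^ j)⁻¹ * subdivide k h * mk [x] ^ j) = k * norm h ∧
      (j < k → (toWord ((mk [x] ^ j)⁻¹ * subdivide k h * mk [x] ^ j)).head? = some x) := by
  obtain ⟨T, hT⟩ := head?_eq_some_iff.1 hhead
  have hcyc : IsCyclicallyReduced (toWord h) := ⟨isReduced_toWord, fun a ha b hb => by
    rw [hhead, Option.mem_some_iff] at hb
    subst hb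
    exact rel_iff_ne_letterInv.2 fun hab => hlast (by rw [ha, hab, letterInv_letterInv])⟩
  obtain ⟨d, rfl⟩ := Nat.exists_eq_add_of_le hj
  set E := replicate d x ++ subdivWord (j + d) T ++ replicate j x
  have hW : subdivWord (j + d) (toWord h) ++ subdivWord (j + d) (toWord h) =
      replicate j x ++ E ++ (replicate d x ++ subdivWord (j + d) T) := by
    simp only [hT, subdivWord_cons, replicate_add j d x, E, append_assoc]
  have hE : IsReduced E := (hW ▸ hcyc.subdivWord.isReduced_append_self).infix ⟨_, _, rfl⟩
  have hz : (mk [x] ^ j)⁻¹ * subdivide (j + d) h * mk [x] ^ j = mk E := by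
    rw [← mk_toWord (x := subdivide _ h), toWord_subdivide, hT, subdivWord_cons, ← mul_mk,
      ← mul_mk, ← mul_mk, mk_replicate, mk_replicate, mk_replicate, pow_add]
    group
  rw [hz, norm_mk_of_isReduced hE, toWord_mk_of_isReduced hE, norm, hT]
  refine ⟨by simp [E]; ring, fun hd => ?_⟩
  simp [E, head?_replicate, show d ≠ 0 by omega]

open List in
theorem norm_conj_pow_subdivide_of_not_head_of_getLast (hhead : (toWord h).head? ≠ some x)
    (hlast : (toWord h).getLast? = some (letterInv x)) (hj : j ≤ k) :
    norm ((mk [x] ^ j)⁻¹ * subdivide k h * mk [x] ^ j) = k * norm h ∧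
      (0 < j → (toWord ((mk [x] ^ j)⁻¹ * subdivide k h * mk [x] ^ j)).head? =
        some (letterInv x)) := by
  obtain ⟨I, hI⟩ := getLast?_eq_some_iff.1 hlast
  have hcyc : IsCyclicallyReduced (toWord h) := ⟨isReduced_toWord, fun a ha b hb => by
    rw [hlast, Option.mem_some_iff] at ha
    subst ha
    exact rel_iff_ne_letterInv.2 fun hab => hhead (by rw [hb, hab, letterInv_letterInv])⟩
  obtain ⟨d, rfl⟩ := Nat.exists_eq_add_of_le hj
  set E := replicate j (letterInv x) ++ subdivWord (j + d) I ++ replicate d (letterInv x)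
  have hW : subdivWord (j + d) (toWord h) ++ subdivWord (j + d) (toWord h) =
      (subdivWord (j + d) I ++ replicate d (letterInv x)) ++ E ++ replicate j (letterInv x) := by
    simp only [hI, subdivWord_append, subdivWord_cons, subdivWord_nil,
      append_nil, Nat.add_comm j d, replicate_add d j, E, append_assoc]
  have hE : IsReduced E := (hW ▸ hcyc.subdivWord.isReduced_append_self).infix ⟨_, _, rfl⟩
  have hz : (mk [x] ^ j)⁻¹ * subdivide (j + d) h * mk [x] ^ j = mk E := by
    rw [← mk_toWord (x := subdivide _ h), toWord_subdivide, hI, subdivWord_append,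
      subdivWord_cons, subdivWord_nil, append_nil, ← mul_mk, ← mul_mk, ← mul_mk,
      mk_replicate_letterInv, mk_replicate_letterInv, mk_replicate_letterInv, pow_add]
    group
  rw [hz, norm_mk_of_isReduced hE, toWord_mk_of_isReduced hE, norm, hI]
  refine ⟨by simp [E]; ring, fun hd => ?_⟩
  simp [E, head?_replicate, show j ≠ 0 by omega]

open List in
theorem norm_conj_pow_subdivide_of_not_head_of_not_getLast (hh : h ≠ 1)
    (hhead : (toWord h).head? ≠ some x) (hlast : (toWord h).getLast? ≠ some (letterInv x))
    (hj : j ≤ k) :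
    norm ((mk [x] ^ j)⁻¹ * subdivide k h * mk [x] ^ j) = k * norm h + 2 * j ∧
      (0 < j → (toWord ((mk [x] ^ j)⁻¹ * subdivide k h * mk [x] ^ j)).head? =
        some (letterInv x)) := by
  have hne : toWord h ≠ [] := by rwa [Ne, toWord_eq_nil_iff]
  have hred : IsReduced (letterInv x :: toWord h ++ [x]) := by
    refine isChain_append.2
      ⟨isChain_cons.2 ⟨fun b hb => ?_, isReduced_toWord⟩, IsReduced.singleton, ?_⟩
    · exact rel_iff_ne_letterInv.2 fun hb' => hhead (by rw [hb, hb', letterInv_letterInv])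
    · rw [← singleton_append, getLast?_append_of_ne_nil _ hne]
      rintro a ha b hb
      obtain rfl : b = x := by simpa [eq_comm] using hb
      exact rel_iff_ne_letterInv.2 fun hx => hlast (by rw [ha, hx, letterInv_letterInv])
  obtain ⟨d, rfl⟩ := Nat.exists_eq_add_of_le hj
  set E := replicate j (letterInv x) ++ subdivWord (j + d) (toWord h) ++ replicate j x
  have hW : subdivWord (j + d) (letterInv x :: toWord h ++ [x]) =
      replicate d (letterInv x) ++ E ++ replicate d x := by
    simp only [cons_append, subdivWord_cons, subdivWord_append, subdivWord_nil, append_nil,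
      replicate_add j d x, E, append_assoc]
    rw [Nat.add_comm j d, replicate_add d j]
    simp only [append_assoc]
  have hE : IsReduced E := (hW ▸ hred.subdivWord).infix ⟨_, _, rfl⟩
  have hz : (mk [x] ^ j)⁻¹ * subdivide (j + d) h * mk [x] ^ j = mk E := by
    rw [← mk_toWord (x := subdivide _ h), toWord_subdivide, ← mul_mk, ← mul_mk,
      mk_replicate_letterInv, mk_replicate]
  rw [hz, norm_mk_of_isReduced hE, toWord_mk_of_isReduced hE, norm]
  refine ⟨by simp [E]; ring, fun hd => ?_⟩
  simp [E, head?_replicate, show j ≠ 0 by omega]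

theorem norm_conj_pow_subdivide (k : ℕ) (h : FreeGroup α) (x : α × Bool) :
    (∀ j ≤ k, norm ((mk [x] ^ j)⁻¹ * subdivide k h * mk [x] ^ j) = k * norm h + 2 * j) ∨
    (∀ j ≤ k, norm ((mk [x] ^ j)⁻¹ * subdivide k h * mk [x] ^ j) = k * norm h) ∨
    (∀ j ≤ k, norm ((mk [x] ^ j)⁻¹ * subdivide k h * mk [x] ^ j) + 2 * j = k * norm h) := by
  by_cases hh : h = 1
  · subst hh
    exact .inr (.inl fun j _ => by
      rw [_root_.map_one, mul_one, inv_mul_cancel, norm_one, mul_zero])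
  by_cases hhead : (toWord h).head? = some x <;>
    by_cases hlast : (toWord h).getLast? = some (letterInv x)
  · exact .inr (.inr fun j hj => (norm_conj_pow_subdivide_of_head_of_getLast hhead hlast hj).1)
  · exact .inr (.inl fun j hj =>
      (norm_conj_pow_subdivide_of_head_of_not_getLast hhead hlast hj).1)
  · exact .inr (.inl fun j hj =>
      (norm_conj_pow_subdivide_of_not_head_of_getLast hhead hlast hj).1)
  · exact .inl fun j hj =>
      (norm_conj_pow_subdivide_of_not_head_of_not_getLast hh hhead hlast hj).1

theorem head?_toWord_conj_pow_subdivide (hh : h ≠ 1) (hj₀ : 0 < j) (hjk : j < k) :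
    (toWord ((mk [x] ^ j)⁻¹ * subdivide k h * mk [x] ^ j)).head? = some x ∨
      (toWord ((mk [x] ^ j)⁻¹ * subdivide k h * mk [x] ^ j)).head? = some (letterInv x) := by
  by_cases hhead : (toWord h).head? = some x <;>
    by_cases hlast : (toWord h).getLast? = some (letterInv x)
  · exact .inl ((norm_conj_pow_subdivide_of_head_of_getLast hhead hlast hjk.le).2 hjk)
  · exact .inl ((norm_conj_pow_subdivide_of_head_of_not_getLast hhead hlast hjk.le).2 hjk)
  · exact .inr ((norm_conj_pow_subdivide_of_not_head_of_getLast hhead hlast hjk.le).2 hj₀)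
  · exact .inr
      ((norm_conj_pow_subdivide_of_not_head_of_not_getLast hh hhead hlast hjk.le).2 hj₀)

theorem exists_eq_subdivide_mul_pow_of_head? (hk : 0 < k) (hj : j ≤ k)
    {g : FreeGroup α} {e : α × Bool}
    (he : (toWord ((mk [x] ^ j)⁻¹ * subdivide k h * mk [x] ^ j)).head? = some e) :
    ∃ g' i, i < k ∧ subdivide k g * mk [x] ^ j = subdivide k g' * mk [e] ^ i := by
  rcases Nat.eq_zero_or_pos j with rfl | hj₀
  · exact ⟨g, 0, hk, by simp⟩
  rcases hj.eq_or_lt with rfl | hjk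
  · refine ⟨g * mk [x], 0, hk, ?_⟩
    rw [_root_.map_mul, subdivide_mk_singleton, pow_zero, mul_one]
  have hh : h ≠ 1 := by
    rintro rfl
    rw [_root_.map_one, mul_one, inv_mul_cancel, toWord_one] at he
    simp at he
  rcases head?_toWord_conj_pow_subdivide hh hj₀ hjk with hx | hx <;>
    obtain rfl := Option.some_injective _ (he.symm.trans hx)
  · exact ⟨g, j, hjk, rfl⟩
  · refine ⟨g * mk [x], k - j, by omega, ?_⟩
    obtain ⟨d, rfl⟩ := Nat.exists_eq_add_of_le hj
    rw [_root_.map_mul, subdivide_mk_singleton, Nat.add_sub_cancel_left, ← inv_mk_singleton,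
      pow_add]
    group

end EdgeProfile

theorem exists_head?_getLast?_eq_of_not_isCyclicallyReduced {W : α × Bool → List (α × Bool)}
    (hW : ∀ l, IsReduced (W l)) (hinv : ∀ l, W (letterInv l) = invRev (W l))
    {T : Set (α × Bool)} {a₀ : α × Bool} (ha₀ : a₀ ∈ T)
    (hT : ∀ a ∈ T, ∀ b ∈ T, b ≠ letterInv a → ¬IsCyclicallyReduced (W a ++ W b)) :
    ∃ e, ∀ a ∈ T, (W a).head? = some e ∧ (W a).getLast? = some (letterInv e) := by
  have hself (a) (ha : a ∈ T) :
      ∃ e, (W a).head? = some e ∧ (W a).getLast? = some (letterInv e) := by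
    have hne : W a ≠ [] := fun h0 =>
      hT a ha a ha (letterInv_ne_self a).symm (by rw [h0]; exact .nil)
    obtain ⟨e, he⟩ := Option.ne_none_iff_exists'.1 (mt List.head?_eq_none_iff.1 hne)
    obtain ⟨f, hf⟩ := Option.ne_none_iff_exists'.1 (mt List.getLast?_eq_none_iff.1 hne)
    refine ⟨e, he, hf.trans (congrArg some (by_contra fun hfe => ?_))⟩
    have hef : e ≠ letterInv f := fun h => hfe (by rw [h, letterInv_letterInv])
    exact hT a ha a ha (letterInv_ne_self a).symm
      (isCyclicallyReduced_append (hW a) (hW a) he hf he hf hef hef)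
  obtain ⟨e, he, hel⟩ := hself a₀ ha₀
  refine ⟨e, fun a ha => ?_⟩
  obtain ⟨f, hf, hfl⟩ := hself a ha
  suffices f = e by subst this; exact ⟨hf, hfl⟩
  by_cases hab : a = letterInv a₀
  · subst hab
    rw [hinv, head?_invRev, hel] at hf
    simpa using hf.symm
  by_contra hfe
  exact hT a₀ ha₀ a ha hab (isCyclicallyReduced_append (hW _) (hW _) he hel hf hfl
    (by rwa [letterInv_letterInv]) fun h => hfe (by rw [h, letterInv_letterInv]))

section Stretch

variable (k : ℕ) (φ : FreeGroup α →* FreeGroup α)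

def edgeImage (p : FreeGroup α) (l : α × Bool) : FreeGroup α :=
  p⁻¹ * subdivide k (φ (mk [l])) * p

theorem edgeImage_letterInv (p : FreeGroup α) (l : α × Bool) :
    edgeImage k φ p (letterInv l) = (edgeImage k φ p l)⁻¹ := by
  simp only [edgeImage, ← inv_mk_singleton, _root_.map_inv]
  group

theorem edgeImage_mul (p y : FreeGroup α) (l : α × Bool) :
    edgeImage k φ (p * y) l = y⁻¹ * edgeImage k φ p l * y := by
  simp [edgeImage, mul_assoc]

theorem edgeImage_subdivide_mul_pow (g : FreeGroup α) (x l : α × Bool) (j : ℕ) :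
    edgeImage k φ (subdivide k g * mk [x] ^ j) l =
      (mk [x] ^ j)⁻¹ * subdivide k (g⁻¹ * φ (mk [l]) * g) * mk [x] ^ j := by
  simp only [edgeImage, _root_.map_mul, _root_.map_inv]
  group

variable [DecidableEq α] [Fintype α]

def maxEdgeNorm (p : FreeGroup α) : ℕ := Finset.univ.sup fun l => norm (edgeImage k φ p l)

theorem norm_edgeImage_le_maxEdgeNorm (p : FreeGroup α) (l : α × Bool) :
    norm (edgeImage k φ p l) ≤ maxEdgeNorm k φ p :=
  Finset.le_sup (f := fun l => norm (edgeImage k φ p l)) (Finset.mem_univ l)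

theorem maxEdgeNorm_le {p : FreeGroup α} {m : ℕ} (h : ∀ l, norm (edgeImage k φ p l) ≤ m) :
    maxEdgeNorm k φ p ≤ m :=
  Finset.sup_le fun l _ => h l

theorem exists_norm_edgeImage_eq_maxEdgeNorm [Nonempty α] (p : FreeGroup α) :
    ∃ l, norm (edgeImage k φ p l) = maxEdgeNorm k φ p := by
  obtain ⟨l, -, hl⟩ := Finset.exists_mem_eq_sup Finset.univ Finset.univ_nonempty
    (fun l => norm (edgeImage k φ p l))
  exact ⟨l, hl.symm⟩

theorem norm_conj_subdivide_map_mk_le (p : FreeGroup α) (L : List (α × Bool)) :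
    norm (p⁻¹ * subdivide k (φ (mk L)) * p) ≤ maxEdgeNorm k φ p * L.length := by
  induction L with
  | nil => simp [← one_eq_mk]
  | cons a L ih =>
    have hsplit : p⁻¹ * subdivide k (φ (mk (a :: L))) * p =
        edgeImage k φ p a * (p⁻¹ * subdivide k (φ (mk L)) * p) := by
      rw [edgeImage, ← List.singleton_append, ← mul_mk, _root_.map_mul, _root_.map_mul]
      group
    rw [hsplit, List.length_cons, Nat.mul_succ]
    have := norm_edgeImage_le_maxEdgeNorm k φ p a
    exact (norm_mul_le _ _).trans (by omega)

end Stretch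

section Minimization

variable [DecidableEq α] {φ : FreeGroup α →* FreeGroup α}

-- Along the edge, both loop lengths are affine in the exponent with slope `-2`, `0` or `2` and
-- divisible by `4` at exponent `0`. If `a` has slope `-2` and `l` slope `2`, their difference at
-- exponent `i` is divisible by `4`, so it cannot be `2`.
theorem norm_edgeImage_succ_add_two_le {g : FreeGroup α} {e a l : α × Bool} {i : ℕ}
    (hi : i < 4)
    (ha : norm (edgeImage 4 φ (subdivide 4 g * mk [e] ^ (i + 1)) a) + 2 ≤
      norm (edgeImage 4 φ (subdivide 4 g * mk [e] ^ i) a))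
    (hl : norm (edgeImage 4 φ (subdivide 4 g * mk [e] ^ i) l) <
      norm (edgeImage 4 φ (subdivide 4 g * mk [e] ^ i) a)) :
    norm (edgeImage 4 φ (subdivide 4 g * mk [e] ^ (i + 1)) l) + 2 ≤
      norm (edgeImage 4 φ (subdivide 4 g * mk [e] ^ i) a) := by
  simp only [edgeImage_subdivide_mul_pow] at *
  rcases norm_conj_pow_subdivide 4 (g⁻¹ * φ (mk [a]) * g) e with Ha | Ha | Ha <;>
  rcases norm_conj_pow_subdivide 4 (g⁻¹ * φ (mk [l]) * g) e with Hl | Hl | Hl <;>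
  · have := Ha i (by omega)
    have := Ha (i + 1) (by omega)
    have := Hl i (by omega)
    have := Hl (i + 1) (by omega)
    omega

variable [Fintype α]

-- The vertices of the `k`-fold subdivision of the Cayley tree, embedded in the Cayley tree
-- by `subdivide k`.
def subdivVertices (k : ℕ) : Set (FreeGroup α) :=
  {p | ∃ g x, ∃ j ≤ k, p = subdivide k g * mk [x] ^ j}

theorem maxEdgeNorm_subdivide_mul_pow_succ_add_two_le [Nonempty α] {g : FreeGroup α}
    {e : α × Bool} {i : ℕ} (hi : i < 4)
    (htension : ∀ l, norm (edgeImage 4 φ (subdivide 4 g * mk [e] ^ i) l) =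
        maxEdgeNorm 4 φ (subdivide 4 g * mk [e] ^ i) →
      (toWord (edgeImage 4 φ (subdivide 4 g * mk [e] ^ i) l)).head? = some e ∧
      (toWord (edgeImage 4 φ (subdivide 4 g * mk [e] ^ i) l)).getLast? =
        some (letterInv e)) :
    maxEdgeNorm 4 φ (subdivide 4 g * mk [e] ^ (i + 1)) + 2 ≤
      maxEdgeNorm 4 φ (subdivide 4 g * mk [e] ^ i) := by
  have hmove (l) (hl : norm (edgeImage 4 φ (subdivide 4 g * mk [e] ^ i) l) =
      maxEdgeNorm 4 φ (subdivide 4 g * mk [e] ^ i)) :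
      norm (edgeImage 4 φ (subdivide 4 g * mk [e] ^ (i + 1)) l) + 2 =
        maxEdgeNorm 4 φ (subdivide 4 g * mk [e] ^ i) := by
    obtain ⟨hhead, hlast⟩ := htension l hl
    rw [pow_succ, ← mul_assoc, edgeImage_mul, norm_conj_add_two_of_head?_of_getLast? hhead hlast,
      hl]
  obtain ⟨a, ha⟩ := exists_norm_edgeImage_eq_maxEdgeNorm 4 φ (subdivide 4 g * mk [e] ^ i)
  have hlower (l) : norm (edgeImage 4 φ (subdivide 4 g * mk [e] ^ (i + 1)) l) + 2 ≤
      maxEdgeNorm 4 φ (subdivide 4 g * mk [e] ^ i) := by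
    rcases (norm_edgeImage_le_maxEdgeNorm 4 φ _ l).eq_or_lt with hl | hl
    · exact (hmove l hl).le
    · have := norm_edgeImage_succ_add_two_le (a := a) (l := l) hi (by rw [hmove a ha, ha])
        (by rw [ha]; exact hl)
      omega
  have := hmove a ha
  have := maxEdgeNorm_le 4 φ (p := subdivide 4 g * mk [e] ^ (i + 1))
    (m := maxEdgeNorm 4 φ (subdivide 4 g * mk [e] ^ i) - 2) fun l => by have := hlower l; omega
  omega

theorem exists_edgeImage_append_isCyclicallyReduced [Nonempty α]
    (φ : FreeGroup α →* FreeGroup α) :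
    ∃ p a b, b ≠ letterInv a ∧
      norm (edgeImage 4 φ p a) = maxEdgeNorm 4 φ p ∧
      norm (edgeImage 4 φ p b) = maxEdgeNorm 4 φ p ∧
      IsCyclicallyReduced (toWord (edgeImage 4 φ p a) ++ toWord (edgeImage 4 φ p b)) := by
  have hne : (subdivVertices 4 : Set (FreeGroup α)).Nonempty :=
    ⟨1, 1, Classical.arbitrary _, 0, by omega, by simp⟩
  obtain ⟨p, ⟨g, x, j, hj, hp⟩, hmin⟩ : ∃ p ∈ subdivVertices 4,
      ∀ q ∈ subdivVertices 4, maxEdgeNorm 4 φ p ≤ maxEdgeNorm 4 φ q :=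
    ⟨_, Function.argminOn_mem _ _ hne, fun q hq => Function.argminOn_le _ _ hq⟩
  by_contra! hcon
  obtain ⟨a₀, ha₀⟩ := exists_norm_edgeImage_eq_maxEdgeNorm 4 φ p
  obtain ⟨e, he⟩ := exists_head?_getLast?_eq_of_not_isCyclicallyReduced
    (W := fun l => toWord (edgeImage 4 φ p l))
    (T := {l | norm (edgeImage 4 φ p l) = maxEdgeNorm 4 φ p})
    (fun _ => isReduced_toWord) (fun l => by rw [edgeImage_letterInv, toWord_inv]) ha₀
    (fun a ha b hb hab => hcon p a b hab ha hb)
  have hhead := (he a₀ ha₀).1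
  rw [hp, edgeImage_subdivide_mul_pow] at hhead
  obtain ⟨g', i, hi, hp'⟩ := exists_eq_subdivide_mul_pow_of_head? (by norm_num) hj hhead
  rw [hp'] at hp
  have hdecrease := maxEdgeNorm_subdivide_mul_pow_succ_add_two_le hi (hp ▸ he)
  have hminimal := hmin _ ⟨g', e, i + 1, hi, rfl⟩
  rw [← hp] at hdecrease
  omega

end Minimization

end FreeGroup

section CyclicLength

open FreeGroup

variable {n : ℕ}

theorem cyclen_le_norm_conj (g x : FreeGroup (Fin n)) : cyclen g ≤ (x * g * x⁻¹).norm :=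
  Nat.sInf_le ⟨x, rfl⟩

theorem exists_cyclen_eq_norm_conj (g : FreeGroup (Fin n)) :
    ∃ x, cyclen g = (x * g * x⁻¹).norm :=
  Nat.sInf_mem (s := {l | ∃ x : FreeGroup (Fin n), l = (x * g * x⁻¹).norm}) ⟨_, 1, rfl⟩

theorem cyclen_conj (y g : FreeGroup (Fin n)) : cyclen (y * g * y⁻¹) = cyclen g := by
  unfold cyclen
  congr 1
  ext l
  constructor
  · rintro ⟨x, rfl⟩
    exact ⟨x * y, by simp only [mul_inv_rev, mul_assoc]⟩
  · rintro ⟨x, rfl⟩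
    exact ⟨x * y⁻¹, by simp only [mul_inv_rev, inv_inv, mul_assoc, inv_mul_cancel_left]⟩

theorem cyclen_mk_of_isCyclicallyReduced {L : List (Fin n × Bool)} (h : IsCyclicallyReduced L) :
    cyclen (mk L) = L.length := by
  obtain ⟨x, hx⟩ := exists_cyclen_eq_norm_conj (mk L)
  refine le_antisymm ?_ (hx ▸ length_le_norm_conj_of_isCyclicallyReduced h x)
  simpa [norm_mk_of_isReduced h.isReduced] using cyclen_le_norm_conj (mk L) 1

theorem cyclen_one : cyclen (1 : FreeGroup (Fin n)) = 0 :=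
  Nat.eq_zero_of_le_zero (by simpa using cyclen_le_norm_conj 1 1)

theorem cyclen_subdivide (k : ℕ) (z : FreeGroup (Fin n)) :
    cyclen (subdivide k z) = k * cyclen z := by
  obtain ⟨x, L, hL, hz⟩ := exists_conj_eq_mk_isCyclicallyReduced z
  have hsub : subdivide k x * subdivide k z * (subdivide k x)⁻¹ = mk (subdivWord k L) := by
    rw [← _root_.map_inv, ← _root_.map_mul, ← _root_.map_mul, hz, subdivide_mk]
  rw [← cyclen_conj (subdivide k x), hsub, ← cyclen_conj x z, hz,
    cyclen_mk_of_isCyclicallyReduced hL.subdivWord, cyclen_mk_of_isCyclicallyReduced hL,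
    length_subdivWord]

theorem cyclen_subdivide_map_le (φ : FreeGroup (Fin n) →* FreeGroup (Fin n)) (k : ℕ)
    (p h : FreeGroup (Fin n)) :
    cyclen (subdivide k (φ h)) ≤ maxEdgeNorm k φ p * cyclen h := by
  obtain ⟨x, hx⟩ := exists_cyclen_eq_norm_conj h
  have hconj : subdivide k (φ h) = (subdivide k (φ x))⁻¹ * subdivide k (φ (x * h * x⁻¹)) *
      (subdivide k (φ x))⁻¹⁻¹ := by
    simp only [_root_.map_mul, _root_.map_inv]
    group
  rw [hconj, cyclen_conj, hx]
  calc cyclen (subdivide k (φ (x * h * x⁻¹)))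
      ≤ (p⁻¹ * subdivide k (φ (x * h * x⁻¹)) * p⁻¹⁻¹).norm := cyclen_le_norm_conj _ _
    _ ≤ maxEdgeNorm k φ p * (toWord (x * h * x⁻¹)).length := by
      simpa only [inv_inv, mk_toWord] using
        norm_conj_subdivide_map_mk_le k φ p (toWord (x * h * x⁻¹))
    _ = maxEdgeNorm k φ p * (x * h * x⁻¹).norm := rfl

theorem cyclen_subdivide_map_mk_pair {φ : FreeGroup (Fin n) →* FreeGroup (Fin n)} {k : ℕ}
    {p : FreeGroup (Fin n)} {a b : Fin n × Bool}
    (h : IsCyclicallyReduced (toWord (edgeImage k φ p a) ++ toWord (edgeImage k φ p b))) :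
    cyclen (subdivide k (φ (mk [a, b]))) =
      (edgeImage k φ p a).norm + (edgeImage k φ p b).norm := by
  have hprod : p⁻¹ * subdivide k (φ (mk [a, b])) * p⁻¹⁻¹ =
      mk (toWord (edgeImage k φ p a) ++ toWord (edgeImage k φ p b)) := by
    rw [← mul_mk, mk_toWord, mk_toWord, edgeImage, edgeImage, inv_inv,
      show [a, b] = [a] ++ [b] from rfl, ← mul_mk, _root_.map_mul, _root_.map_mul]
    group
  rw [← cyclen_conj p⁻¹, hprod, cyclen_mk_of_isCyclicallyReduced h, List.length_append]
  rfl

end CyclicLength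

/-- The supremum defining `‖φ‖_B = sup_{1 ≠ h} ‖φ h‖/‖h‖` (cyclically reduced
lengths w.r.t. the standard basis) is a maximum, realized by an element of
cyclically reduced length at most `2`. -/
theorem automorphism_norm_realized_by_short_element
    (n : ℕ) (hn : 1 ≤ n) (φ : FreeGroup (Fin n) ≃* FreeGroup (Fin n)) :
    ∃ g : FreeGroup (Fin n), g ≠ 1 ∧ cyclen g ≤ 2 ∧
      ∀ h : FreeGroup (Fin n), h ≠ 1 →
        cyclen (φ h) * cyclen g ≤ cyclen (φ g) * cyclen h := by
  have : Nonempty (Fin n) := ⟨⟨0, hn⟩⟩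
  obtain ⟨p, a, b, hab, ha, hb, hcyc⟩ :=
    FreeGroup.exists_edgeImage_append_isCyclicallyReduced φ.toMonoidHom
  have hg : cyclen (FreeGroup.mk [a, b]) = 2 :=
    cyclen_mk_of_isCyclicallyReduced (FreeGroup.isCyclicallyReduced_pair hab)
  have hφg :
      4 * cyclen (φ (FreeGroup.mk [a, b])) = 2 * FreeGroup.maxEdgeNorm 4 φ.toMonoidHom p := by
    have := cyclen_subdivide_map_mk_pair hcyc
    rw [cyclen_subdivide, ha, hb, MulEquiv.coe_toMonoidHom] at this
    omega
  refine ⟨FreeGroup.mk [a, b], fun h1 => ?_, hg.le, fun h _ => ?_⟩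
  · rw [h1, cyclen_one] at hg
    omega
  · have hh := cyclen_subdivide_map_le φ.toMonoidHom 4 p h
    rw [cyclen_subdivide, MulEquiv.coe_toMonoidHom] at hh
    rw [hg]
    nlinarith
end
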